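/- Let V be a finite-dimensional real vector space with a complex structure I, and σ a non-degenerate complex-bilinear form of type (2,0) with respect to I. Suppose a finite group G acts linearly on V commuting with I and preserving σ. Then there exist a G-invariant positive definite inner product g on V and a G-equivariant linear operator J with J² = -Id, JI = -IJ, and g Hermitian with respect to both I and J. -/

import Mathlib

/-!
Averaging an arbitrary inner product over `G`, and then over `{1, I}`, gives a `G`-invariant
metric `g` that is Hermitian for `I`. Let `A` be the `g`-skew operator with
`g (A x) y = Re σ(x, y)`: it is injective, anticommutes with `I` because `σ` has type `(2,0)`, and
commutes with `G`. Its polar part `J = A (-A²)^(-1/2)` is a `g`-orthogonal complex structure;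
since `(-A²)^(-1/2)` is a polynomial in `A²`, `J` inherits the (anti)commutation relations of `A`.
-/

open Polynomial

namespace LinearMap

variable {V : Type*} [AddCommGroup V] [Module ℝ V]

structure IsPosDef (g : LinearMap.BilinForm ℝ V) : Prop where
  symm : ∀ x y, g x y = g y x
  pos : ∀ x, x ≠ 0 → 0 < g x x

theorem IsPosDef.nonneg {g : LinearMap.BilinForm ℝ V} (hg : g.IsPosDef) (x : V) :
    0 ≤ g x x := by
  rcases eq_or_ne x 0 with rfl | hx
  · simp
  · exact (hg.pos x hx).le

theorem IsPosDef.nondegenerate {g : LinearMap.BilinForm ℝ V} (hg : g.IsPosDef) :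
    g.Nondegenerate :=
  ⟨fun x hx => by_contra fun h => (hg.pos x h).ne' (hx x),
    fun x hx => by_contra fun h => (hg.pos x h).ne' (hx x)⟩

theorem IsPosDef.compl₁₂ {W : Type*} [AddCommGroup W] [Module ℝ W]
    {g : LinearMap.BilinForm ℝ V} (hg : g.IsPosDef) {f : W →ₗ[ℝ] V}
    (hf : Function.Injective f) : (g.compl₁₂ f f).IsPosDef :=
  ⟨fun x y => hg.symm (f x) (f y), fun x hx => hg.pos (f x) ((map_ne_zero_iff f hf).mpr hx)⟩

theorem isPosDef_dotProductBilin (n : ℕ) :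
    (dotProductBilin ℝ ℝ : LinearMap.BilinForm ℝ (Fin n → ℝ)).IsPosDef :=
  ⟨dotProduct_comm, fun x hx => (Fintype.sum_nonneg fun i => mul_self_nonneg (x i)).lt_of_ne
    (Ne.symm (dotProduct_self_eq_zero.not.mpr hx))⟩

theorem exists_isPosDef [FiniteDimensional ℝ V] : ∃ g : LinearMap.BilinForm ℝ V, g.IsPosDef :=
  ⟨_, (isPosDef_dotProductBilin _).compl₁₂ (Module.finBasis ℝ V).equivFun.injective⟩

theorem exists_isPosDef_forall_isOrthogonal [FiniteDimensional ℝ V] {G : Type*} [Group G]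
    [Finite G] (ρ : G →* V ≃ₗ[ℝ] V) :
    ∃ g : LinearMap.BilinForm ℝ V, g.IsPosDef ∧ ∀ γ, g.IsOrthogonal (ρ γ) := by
  have := Fintype.ofFinite G
  obtain ⟨g, hg⟩ := exists_isPosDef (V := V)
  refine ⟨∑ γ, g.compl₁₂ (ρ γ).toLinearMap (ρ γ).toLinearMap,
    ⟨fun x y => ?_, fun x hx => ?_⟩, fun δ x y => ?_⟩
  · simp [hg.symm (ρ _ x)]
  · simp only [sum_apply, compl₁₂_apply, LinearEquiv.coe_coe]
    exact Finset.sum_pos' (fun γ _ => hg.nonneg _)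
      ⟨1, Finset.mem_univ 1, by simpa using hg.pos x hx⟩
  · simp only [sum_apply, compl₁₂_apply, LinearEquiv.coe_coe]
    exact Fintype.sum_equiv (Equiv.mulRight δ) _ _ fun γ => by simp [map_mul]

theorem IsPosDef.add_compl₁₂ {g : LinearMap.BilinForm ℝ V} (hg : g.IsPosDef)
    (T : Module.End ℝ V) : (g + g.compl₁₂ T T).IsPosDef :=
  ⟨fun x y => by simp [hg.symm x, hg.symm (T x)], fun x hx => by
    simpa using add_pos_of_pos_of_nonneg (hg.pos x hx) (hg.nonneg (T x))⟩

theorem isOrthogonal_add_compl₁₂_self {g : LinearMap.BilinForm ℝ V} {T : Module.End ℝ V}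
    (hT : T * T = -1) : (g + g.compl₁₂ T T).IsOrthogonal T := by
  intro x y
  simp [← Module.End.mul_apply, hT, add_comm]

theorem IsOrthogonal.add_compl₁₂ {g : LinearMap.BilinForm ℝ V} {S T : Module.End ℝ V}
    (hS : g.IsOrthogonal S) (hST : Commute S T) : (g + g.compl₁₂ T T).IsOrthogonal S := by
  intro x y
  simp only [add_apply, compl₁₂_apply, ← Module.End.mul_apply, ← hST.eq]
  simp only [Module.End.mul_apply, hS _ _]

theorem exists_isPosDef_isOrthogonal_of_commute [FiniteDimensional ℝ V] {G : Type*} [Group G]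
    [Finite G] (ρ : G →* V ≃ₗ[ℝ] V) {I : Module.End ℝ V} (hI : I * I = -1)
    (hcomm : ∀ γ x, ρ γ (I x) = I (ρ γ x)) :
    ∃ g : LinearMap.BilinForm ℝ V, g.IsPosDef ∧ (∀ γ, g.IsOrthogonal (ρ γ)) ∧
      g.IsOrthogonal I := by
  obtain ⟨g, hg, hgρ⟩ := exists_isPosDef_forall_isOrthogonal ρ
  exact ⟨g + g.compl₁₂ I I, hg.add_compl₁₂ I,
    fun γ => (hgρ γ).add_compl₁₂ (S := (ρ γ).toLinearMap) (ext (hcomm γ)),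
    isOrthogonal_add_compl₁₂_self hI⟩

theorem separatingLeft_compr₂_reLm {σ : V →ₗ[ℝ] V →ₗ[ℝ] ℂ} {I : Module.End ℝ V}
    (hσI : ∀ x y, σ x (I y) = Complex.I * σ x y)
    (hσ : ∀ x, x ≠ 0 → ∃ y, σ x y ≠ 0) :
    (σ.compr₂ Complex.reLm).SeparatingLeft := by
  intro x hx
  by_contra hx0
  obtain ⟨y, hy⟩ := hσ x hx0
  refine hy (Complex.ext (hx y) ?_)
  simpa [hσI] using hx (I y)

theorem IsSelfAdjoint.aeval {R M : Type*} [CommRing R] [AddCommGroup M] [Module R M]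
    {B : LinearMap.BilinForm R M} {T : Module.End R M} (hT : B.IsSelfAdjoint T) (p : R[X]) :
    B.IsSelfAdjoint (aeval T p) := by
  induction p using Polynomial.induction_on' with
  | add p q hp hq => rw [map_add]; exact hp.add hq
  | monomial n a =>
    have hpow : B.IsSelfAdjoint ⇑(T ^ n) := by
      induction n with
      | zero => exact isAdjointPair_one
      | succ n ih =>
        have := ih.mul hT
        rwa [← pow_succ, ← pow_succ'] at this
    rw [aeval_monomial, Algebra.algebraMap_eq_smul_one, smul_one_mul]
    exact hpow.smul a

end LinearMap

namespace LinearMap.BilinForm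

variable {K V : Type*} [Field K] [AddCommGroup V] [Module K V] [FiniteDimensional K V]
  (B : LinearMap.BilinForm K V) {g : LinearMap.BilinForm K V} (hg : g.Nondegenerate)

theorem symmCompOfNondegenerate_apply_of_isOrthogonal {T : Module.End K V}
    (hT : Function.Surjective T) (hgT : g.IsOrthogonal T) {c : K}
    (hBT : ∀ x y, B (T x) (T y) = c * B x y) (x : V) :
    B.symmCompOfNondegenerate g hg (T x) = c • T (B.symmCompOfNondegenerate g hg x) := by
  refine LinearMap.ker_eq_bot.mp hg.ker_eq_bot (LinearMap.ext fun y => ?_)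
  obtain ⟨y, rfl⟩ := hT y
  simp [hgT _ _, hBT]

theorem isSkewAdjoint_symmCompOfNondegenerate (hgs : ∀ x y, g x y = g y x)
    (hB : ∀ x y, B x y = -B y x) : g.IsSkewAdjoint (B.symmCompOfNondegenerate g hg) := by
  intro x y
  simp [hB x, hgs x]

theorem symmCompOfNondegenerate_injective (hB : B.SeparatingLeft) :
    Function.Injective (B.symmCompOfNondegenerate g hg) := by
  refine LinearMap.ker_eq_bot.mp (LinearMap.ker_eq_bot'.mpr fun x hx => hB x fun y => ?_)
  simp [← symmCompOfNondegenerate_left_apply B hg, hx]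

end LinearMap.BilinForm

/-- `aeval T q` is `T^(-1/2)`, obtained by interpolating `t ↦ t^(-1/2)` on the spectrum. -/
theorem LinearMap.IsSymmetric.exists_mul_aeval_sq_eq_one {E : Type*} [NormedAddCommGroup E]
    [InnerProductSpace ℝ E] [FiniteDimensional ℝ E] {T : E →ₗ[ℝ] E} (hT : T.IsSymmetric)
    (hpos : ∀ x, x ≠ 0 → 0 < inner ℝ (T x) x) : ∃ q : ℝ[X], T * aeval T q ^ 2 = 1 := by
  set b := hT.eigenvectorBasis rfl
  set μ := hT.eigenvalues rfl
  have hμ : ∀ i, 0 < μ i := fun i => by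
    simpa [b, hT.apply_eigenvectorBasis, real_inner_smul_left] using
      hpos (b i) (b.toBasis.ne_zero i)
  obtain ⟨q, hq⟩ : ∃ q : ℝ[X], ∀ i, q.eval (μ i) = (√(μ i))⁻¹ :=
    ⟨Lagrange.interpolate (Finset.univ.image μ) _root_.id fun t => (√t)⁻¹, fun i =>
      Lagrange.eval_interpolate_at_node _ (Set.injOn_id _)
        (Finset.mem_image_of_mem μ (Finset.mem_univ i))⟩
  refine ⟨q, b.toBasis.ext fun i => ?_⟩
  have hb : Module.End.HasEigenvector T (μ i) (b i) := hT.hasEigenvector_eigenvectorBasis rfl i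
  have hsq : (√(μ i))⁻¹ * (√(μ i))⁻¹ * μ i = 1 := by
    rw [← mul_inv, Real.mul_self_sqrt (hμ i).le, inv_mul_cancel₀ (hμ i).ne']
  simp only [OrthonormalBasis.coe_toBasis, pow_two, Module.End.mul_apply, Module.End.one_apply,
    Module.End.aeval_apply_of_hasEigenvector hb, hq, map_smul, hb.apply_eq_smul, smul_smul, hsq,
    one_smul]

theorem LinearMap.IsPosDef.exists_mul_aeval_sq_eq_one {V : Type*} [AddCommGroup V] [Module ℝ V]
    [FiniteDimensional ℝ V] {g : LinearMap.BilinForm ℝ V} (hg : g.IsPosDef)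
    {P : Module.End ℝ V} (hP : g.IsSelfAdjoint P) (hPpos : ∀ x, x ≠ 0 → 0 < g (P x) x) :
    ∃ q : ℝ[X], P * aeval P q ^ 2 = 1 := by
  let core : InnerProductSpace.Core ℝ V :=
    { inner x y := g x y
      conj_inner_symm x y := hg.symm y x
      re_inner_nonneg := hg.nonneg
      add_left x y z := by simp
      smul_left x y r := by simp
      definite x hx := by_contra fun h => (hg.pos x h).ne' hx }
  let := core.toNormedAddCommGroup
  let := InnerProductSpace.ofCore core.toCore
  exact LinearMap.IsSymmetric.exists_mul_aeval_sq_eq_one hP hPpos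

theorem LinearMap.IsPosDef.exists_isOrthogonal_mul_self_eq_neg_one {V : Type*} [AddCommGroup V]
    [Module ℝ V] [FiniteDimensional ℝ V] {g : LinearMap.BilinForm ℝ V} (hg : g.IsPosDef)
    {A : Module.End ℝ V} (hA : g.IsSkewAdjoint A) (hA_inj : Function.Injective A) :
    ∃ J : Module.End ℝ V, J * J = -1 ∧ g.IsOrthogonal J ∧
      (∀ S, Commute S A → Commute S J) ∧ ∀ S, S * A = -(A * S) → S * J = -(J * S) := by
  have hP : g.IsSelfAdjoint ⇑(-(A * A)) := by
    intro x y
    simp [hA _ _]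
  have hPpos : ∀ x, x ≠ 0 → 0 < g ((-(A * A)) x) x := fun x hx => by
    simpa [hA _ _] using hg.pos (A x) ((map_ne_zero_iff A hA_inj).mpr hx)
  obtain ⟨q, hq⟩ := hg.exists_mul_aeval_sq_eq_one hP hPpos
  set R := aeval (-(A * A)) q
  have hR : ∀ S, Commute S (A * A) → Commute S R := fun S hS =>
    Algebra.commute_of_mem_adjoin_singleton_of_commute (aeval_mem_adjoin_singleton ℝ _)
      hS.neg_right
  have hAR : Commute A R := hR A ((Commute.refl A).mul_right (Commute.refl A))
  refine ⟨A * R, ?_, fun x y => ?_, fun S hS => hS.mul_right (hR S (hS.mul_right hS)),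
    fun S hS => ?_⟩
  · calc A * R * (A * R) = -(-(A * A) * R ^ 2) := by
          rw [pow_two, neg_mul, neg_neg, mul_assoc, ← mul_assoc R, ← hAR.eq]
          simp only [mul_assoc]
      _ = -1 := by rw [hq]
  · have hPR : Commute (-(A * A)) R := hR _ (Commute.refl _).neg_left
    calc g ((A * R) x) ((A * R) y) = g (R x) ((-(A * A) * R) y) := by simp [hA _ _]
      _ = g x ((R * -(A * A) * R) y) := hP.aeval q _ _
      _ = g x y := by rw [← hPR.eq, mul_assoc, ← pow_two R, hq, Module.End.one_apply]
  · have hSR : Commute S R := hR S <| by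
      rw [Commute, SemiconjBy, ← mul_assoc, hS, neg_mul, mul_assoc, hS, mul_neg, neg_neg,
        mul_assoc]
    rw [← mul_assoc, hS, neg_mul, mul_assoc, hSR.eq, ← mul_assoc]

/-- Equivariant version: if a finite group `G` acts linearly on `(V, I)`
commuting with the complex structure `I` and preserving a non-degenerate
complex-bilinear `(2,0)`-form `σ`, then there is a `G`-invariant compatible
hyper-Hermitian structure `(g, J)`: `g` is a `G`-invariant positive definite
inner product, Hermitian for both `I` and `J`, and `J` is a `G`-equivariant
complex structure anticommuting with `I`. -/
theorem quaternionicDouble.stmt3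
    {V : Type*} [AddCommGroup V] [Module ℝ V] [FiniteDimensional ℝ V]
    (I : Module.End ℝ V) (hI : I * I = -1)
    (σ : V →ₗ[ℝ] V →ₗ[ℝ] ℂ)
    (halt : ∀ x y, σ x y = - σ y x)
    (htype : ∀ x y, σ (I x) y = Complex.I * σ x y)
    (hnd : ∀ x, x ≠ 0 → ∃ y, σ x y ≠ 0)
    {G : Type*} [Group G] [Finite G]
    (ρ : G →* (V ≃ₗ[ℝ] V))
    (hcomm : ∀ γ x, ρ γ (I x) = I (ρ γ x))
    (hpres : ∀ γ x y, σ (ρ γ x) (ρ γ y) = σ x y) :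
    ∃ (g : V →ₗ[ℝ] V →ₗ[ℝ] ℝ) (J : Module.End ℝ V),
      (∀ x y, g x y = g y x) ∧
      (∀ x, x ≠ 0 → 0 < g x x) ∧
      (∀ γ x y, g (ρ γ x) (ρ γ y) = g x y) ∧
      (∀ γ x, J (ρ γ x) = ρ γ (J x)) ∧
      J * J = -1 ∧
      J * I = -(I * J) ∧
      (∀ x y, g (I x) (I y) = g x y) ∧
      (∀ x y, g (J x) (J y) = g x y) := by
  have hσI : ∀ x y, σ x (I y) = Complex.I * σ x y := fun x y => by
    rw [halt x, htype, halt y]; ring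
  obtain ⟨g, hg, hgρ, hgI⟩ := LinearMap.exists_isPosDef_isOrthogonal_of_commute ρ hI hcomm
  set s := σ.compr₂ Complex.reLm
  set A := LinearMap.BilinForm.symmCompOfNondegenerate s g hg.nondegenerate
  have hA : g.IsSkewAdjoint A := LinearMap.BilinForm.isSkewAdjoint_symmCompOfNondegenerate _ _
    hg.symm fun x y => by simp [s, halt x y]
  have hA_inj : Function.Injective A := LinearMap.BilinForm.symmCompOfNondegenerate_injective _ _
    (LinearMap.separatingLeft_compr₂_reLm hσI hnd)
  have hIA : I * A = -(A * I) := by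
    have hI_surj : Function.Surjective I := fun y =>
      ⟨-I y, by rw [map_neg, ← Module.End.mul_apply, hI]; simp⟩
    ext x
    have := LinearMap.BilinForm.symmCompOfNondegenerate_apply_of_isOrthogonal s hg.nondegenerate
      hI_surj hgI (c := -1) (fun x y => by simp [s, htype, hσI, ← mul_assoc]) x
    simp [A, this]
  have hρA : ∀ γ, Commute (ρ γ).toLinearMap A := fun γ => by
    ext x
    have := LinearMap.BilinForm.symmCompOfNondegenerate_apply_of_isOrthogonal s hg.nondegenerate
      (ρ γ).surjective (hgρ γ) (c := 1) (fun x y => by simp [s, hpres]) x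
    simpa [A] using this.symm
  obtain ⟨J, hJJ, hJg, hJcomm, hJanti⟩ := hg.exists_isOrthogonal_mul_self_eq_neg_one hA hA_inj
  refine ⟨g, J, hg.symm, hg.pos, hgρ,
    fun γ x => (LinearMap.congr_fun (hJcomm _ (hρA γ)).eq x).symm, hJJ, ?_, hgI, hJg⟩
  rw [hJanti I hIA, neg_neg]
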